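/- Let X be a metric space, A, B ⊆ X nonempty with dist(a, b) ≥ c for all a ∈ A, b ∈ B, where c > 0. Suppose (aᵢ)ᵢ∈ℕ and (bᵢ)ᵢ∈ℕ are sequences of elements of X with (aᵢ, bⱼ) coded by a point pᵢⱼ ∈ X satisfying: pᵢⱼ ∈ A whenever i < j, and pᵢⱼ ∈ B whenever j < i. Let f : X → Y be a map into a metric space Y, and A', B' ⊆ Y nonempty with dist(a', b') ≥ c for all a' ∈ A', b' ∈ B'. Assume f maps A into A'^[c/3] and B into B'^[c/3]. Then there do not exist indices i₀ < i₁ and l₁ < l₀ with f(p_{i₀ i₁}) = f(p_{l₀ l₁}). -/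
import Mathlib


theorem stmt_3 {X Y : Type*} [MetricSpace X] [MetricSpace Y]
    (A B : Set X) (hA : A.Nonempty) (hB : B.Nonempty) (c : ℝ) (hc : 0 < c)
    (hAB : ∀ a ∈ A, ∀ b ∈ B, c ≤ dist a b)
    (p : ℕ → ℕ → X)
    (hpA : ∀ i j : ℕ, i < j → p i j ∈ A)
    (hpB : ∀ i j : ℕ, j < i → p i j ∈ B)
    (f : X → Y)
    (A' B' : Set Y) (hA' : A'.Nonempty) (hB' : B'.Nonempty)
    (hA'B' : ∀ a' ∈ A', ∀ b' ∈ B', c ≤ dist a' b')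
    (hfA : ∀ x ∈ A, ∃ a' ∈ A', dist (f x) a' ≤ c / 3)
    (hfB : ∀ x ∈ B, ∃ b' ∈ B', dist (f x) b' ≤ c / 3) :
    ¬ ∃ i₀ i₁ l₀ l₁ : ℕ, i₀ < i₁ ∧ l₁ < l₀ ∧ f (p i₀ i₁) = f (p l₀ l₁) := by
  rintro ⟨i₀, i₁, l₀, l₁, h1, h2, heq⟩
  obtain ⟨a', ha', hda⟩ := hfA _ (hpA _ _ h1)
  obtain ⟨b', hb', hdb⟩ := hfB _ (hpB _ _ h2)
  have := hA'B' a' ha' b' hb'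
  have : dist a' b' ≤ dist (f (p i₀ i₁)) a' + dist (f (p l₀ l₁)) b' := by
    rw [heq]; rw [dist_comm (f (p l₀ l₁)) a']
    exact dist_triangle _ _ _
  linarith
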